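/- arXiv:2504.02427 — 2 statements merged into one kernel-verified Lean document; each statement's English description precedes it below -/
import Mathlib

section
/- Let π : A → B be a surjective map between nonempty finite sets and let μ, ρ be probability measures on {0,...,N}^A such that: (1) μ is a π-lift; (2) ρ is sufficiently symmetric, i.e., for each b there is a subgroup G_b of the permutations of π⁻¹(b), acting transitively on π⁻¹(b), such that ρ is invariant under the induced action of ∏_b G_b on {0,...,N}^A; (3) the pushdown of μ is stochastically dominated by the horizontal marginal of ρ. Then μ is stochastically dominated by ρ. -/
/-!
By Strassen's theorem on the finite poset `Fin (N + 1) ^ A` it suffices to show `μ U ≤ ρ U` for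
every upper set `U`. Let `E` be the set of `z : B → Fin (N + 1)` which some section `t` of `π` lifts
into `U` (put `z b` at `t b`, zeros elsewhere). A `π`-lift `x` lies below the lift of its pushdown
along a section through its nonzero coordinates, so `μ U ≤ μ (pushdown ∈ E)`, and (3) bounds this
by `ρ (x ∘ s₀ ∈ E)` for a fixed section `s₀`. To compare the latter with `ρ U`, average over the
group `∏ G_b`: for each `x`, reading `g • x` along `s₀` lands in `E` for at most as many `g` as
reading it along the witnessing sections. This is proved one fibre at a time; by transitivity every
coordinate of `g • x` in a fibre has the same distribution, and on one fibre a union of threshold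
events at a single point is a single threshold event.

Strassen's theorem itself is proved by induction on the size of the supports: route mass from a
point `x₀` of the first measure to some `y₀ ≥ x₀` of the second, as much as the upper sets
separating them allow; either a support point disappears, or some upper set becomes tight and the
problem splits into its inside and outside.
-/

open MeasureTheory ProbabilityTheory

def StochDom {E : Type*} [MeasurableSpace E] [Preorder E] (μ ν : Measure E) : Prop :=
  ∃ κ : Measure (E × E), IsProbabilityMeasure κ ∧ κ.map Prod.fst = μ ∧
    κ.map Prod.snd = ν ∧ κ {q | q.1 ≤ q.2} = 1

open Finset
open scoped NNReal ENNReal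

theorem tsub_single_add_single {ι : Type*} [DecidableEq ι] {f : ι → ℝ≥0} {z : ι} {ε : ℝ≥0}
    (hz : ε ≤ f z) : f - Pi.single z ε + Pi.single z ε = f :=
  tsub_add_cancel_of_le fun x => by
    rcases eq_or_ne x z with rfl | hx
    · simpa using hz
    · simp [hx]

theorem sum_tsub_single_add {ι : Type*} [DecidableEq ι] {f : ι → ℝ≥0} {z : ι} {ε : ℝ≥0}
    (hz : ε ≤ f z) (U : Finset ι) :
    ∑ x ∈ U, (f - Pi.single z ε : ι → ℝ≥0) x + (if z ∈ U then ε else 0) = ∑ x ∈ U, f x := by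
  rw [← sum_pi_single', ← sum_add_distrib]
  simp_rw [← Pi.add_apply, tsub_single_add_single hz]

theorem sum_indicator_coe {ι M : Type*} [DecidableEq ι] [AddCommMonoid M] (f : ι → M)
    (U V : Finset ι) : ∑ x ∈ V, (U : Set ι).indicator f x = ∑ x ∈ V ∩ U, f x := by
  rw [sum_indicator_eq_sum_filter]
  simp [filter_mem_eq_inter]

theorem sum_indicator_compl_coe {ι M : Type*} [DecidableEq ι] [AddCommMonoid M] (f : ι → M)
    (U V : Finset ι) : ∑ x ∈ V, (U : Set ι)ᶜ.indicator f x = ∑ x ∈ V \ U, f x := by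
  rw [sum_indicator_eq_sum_filter, sdiff_eq_filter]
  simp

theorem card_filter_ne_zero_le {ι : Type*} [Fintype ι] {f g : ι → ℝ≥0} (h : f ≤ g) :
    #{x | f x ≠ 0} ≤ #{x | g x ≠ 0} :=
  card_le_card fun x => by simpa using fun hx => ((pos_iff_ne_zero.2 hx).trans_le (h x)).ne'

theorem card_filter_ne_zero_lt {ι : Type*} [Fintype ι] {f g : ι → ℝ≥0} (h : f ≤ g) {z : ι}
    (hg : g z ≠ 0) (hf : f z = 0) : #{x | f x ≠ 0} < #{x | g x ≠ 0} :=
  card_lt_card <| (ssubset_iff_of_subset fun x => by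
    simpa using fun hx => ((pos_iff_ne_zero.2 hx).trans_le (h x)).ne').2
      ⟨z, by simpa using hg, by simpa using hf⟩

section Strassen

variable {Ω : Type*} [Fintype Ω] [Preorder Ω]

structure UpperSetDominated (p q : Ω → ℝ≥0) : Prop where
  sum_eq : ∑ x, p x = ∑ x, q x
  sum_le : ∀ U : Finset Ω, IsUpperSet (U : Set Ω) → ∑ x ∈ U, p x ≤ ∑ x ∈ U, q x

structure IsMonotoneCoupling (w : Ω → Ω → ℝ≥0) (p q : Ω → ℝ≥0) : Prop where
  le_of_ne_zero : ∀ x y, w x y ≠ 0 → x ≤ y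
  sum_right : ∀ x, ∑ y, w x y = p x
  sum_left : ∀ y, ∑ x, w x y = q y

theorem IsMonotoneCoupling.add {w₁ w₂ : Ω → Ω → ℝ≥0} {p₁ p₂ q₁ q₂ : Ω → ℝ≥0}
    (h₁ : IsMonotoneCoupling w₁ p₁ q₁) (h₂ : IsMonotoneCoupling w₂ p₂ q₂) :
    IsMonotoneCoupling (w₁ + w₂) (p₁ + p₂) (q₁ + q₂) where
  le_of_ne_zero x y h := by
    by_contra hxy
    simp [h₁.le_of_ne_zero x y |>.mt hxy, h₂.le_of_ne_zero x y |>.mt hxy] at h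
  sum_right x := by simp [sum_add_distrib, h₁.sum_right, h₂.sum_right]
  sum_left y := by simp [sum_add_distrib, h₁.sum_left, h₂.sum_left]

theorem isMonotoneCoupling_single [DecidableEq Ω] {x₀ y₀ : Ω} (h : x₀ ≤ y₀) (ε : ℝ≥0) :
    IsMonotoneCoupling (Pi.single x₀ (Pi.single y₀ ε)) (Pi.single x₀ ε) (Pi.single y₀ ε) where
  le_of_ne_zero x y hxy := by
    obtain rfl : x = x₀ := by by_contra hx; simp [hx] at hxy
    obtain rfl : y = y₀ := by by_contra hy; simp [hy] at hxy
    exact h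
  sum_right x := by
    by_cases hx : x = x₀
    · subst hx; simp
    · simp [hx]
  sum_left y := by
    rw [← Finset.sum_apply, Finset.sum_pi_single']
    simp

theorem exists_isMonotoneCoupling_of_tsub_single [DecidableEq Ω] {p q : Ω → ℝ≥0} {x₀ y₀ : Ω}
    {ε : ℝ≥0} (hxy : x₀ ≤ y₀) (hp : ε ≤ p x₀) (hq : ε ≤ q y₀)
    (h : ∃ w, IsMonotoneCoupling w (p - Pi.single x₀ ε) (q - Pi.single y₀ ε)) :
    ∃ w, IsMonotoneCoupling w p q := by
  obtain ⟨w, hw⟩ := h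
  refine ⟨w + Pi.single x₀ (Pi.single y₀ ε), ?_⟩
  simpa [tsub_single_add_single hp, tsub_single_add_single hq] using
    hw.add (isMonotoneCoupling_single hxy ε)

theorem UpperSetDominated.exists_le_ne_zero {p q : Ω → ℝ≥0} (h : UpperSetDominated p q) {x₀ : Ω}
    (hx₀ : p x₀ ≠ 0) : ∃ y, x₀ ≤ y ∧ q y ≠ 0 := by
  classical
  by_contra! hq
  have hU : IsUpperSet (({y | x₀ ≤ y} : Finset Ω) : Set Ω) := by
    convert isUpperSet_Ici x₀
    ext; simp
  have hle := h.sum_le _ hU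
  rw [sum_eq_zero fun y hy => hq y (by simpa using hy)] at hle
  exact hx₀ (le_zero_iff.1 ((single_le_sum (fun _ _ => zero_le) (by simp)).trans hle))

theorem UpperSetDominated.tsub_single [DecidableEq Ω] {p q : Ω → ℝ≥0} (h : UpperSetDominated p q)
    {x₀ y₀ : Ω} {ε : ℝ≥0} (hxy : x₀ ≤ y₀) (hp : ε ≤ p x₀) (hq : ε ≤ q y₀)
    (hslack : ∀ U : Finset Ω, IsUpperSet (U : Set Ω) → y₀ ∈ U → x₀ ∉ U →
      ∑ x ∈ U, p x + ε ≤ ∑ x ∈ U, q x) :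
    UpperSetDominated (p - Pi.single x₀ ε) (q - Pi.single y₀ ε) where
  sum_eq := by
    have hp' := sum_tsub_single_add hp univ
    have hq' := sum_tsub_single_add hq univ
    simp only [mem_univ, if_true] at hp' hq'
    exact add_right_cancel (hp'.trans (h.sum_eq.trans hq'.symm))
  sum_le U hU := by
    have hp' := sum_tsub_single_add hp U
    have hq' := sum_tsub_single_add hq U
    by_cases hx : x₀ ∈ U
    · have hy : y₀ ∈ U := hU hxy hx
      simp only [hx, hy, if_true] at hp' hq'
      exact le_of_add_le_add_right (hp' ▸ hq' ▸ h.sum_le U hU)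
    by_cases hy : y₀ ∈ U
    · simp only [hx, hy, if_true, if_false, add_zero] at hp' hq'
      exact le_of_add_le_add_right (hp' ▸ hq' ▸ hslack U hU hy hx)
    · simp only [hx, hy, if_false, add_zero] at hp' hq'
      exact hp' ▸ hq' ▸ h.sum_le U hU

theorem UpperSetDominated.indicator [DecidableEq Ω] {p q : Ω → ℝ≥0} (h : UpperSetDominated p q)
    {U : Finset Ω} (hU : IsUpperSet (U : Set Ω)) (htight : ∑ x ∈ U, p x = ∑ x ∈ U, q x) :
    UpperSetDominated ((U : Set Ω).indicator p) ((U : Set Ω).indicator q) where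
  sum_eq := by simpa [sum_indicator_coe] using htight
  sum_le V hV := by
    simpa only [sum_indicator_coe] using h.sum_le _ (by simpa using hV.inter hU)

theorem UpperSetDominated.indicator_compl [DecidableEq Ω] {p q : Ω → ℝ≥0}
    (h : UpperSetDominated p q) {U : Finset Ω} (hU : IsUpperSet (U : Set Ω))
    (htight : ∑ x ∈ U, p x = ∑ x ∈ U, q x) :
    UpperSetDominated ((U : Set Ω)ᶜ.indicator p) ((U : Set Ω)ᶜ.indicator q) where
  sum_eq := by
    simp only [sum_indicator_compl_coe]
    refine add_right_cancel (b := ∑ x ∈ U, p x) ?_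
    rw [sum_sdiff (subset_univ U), htight, sum_sdiff (subset_univ U)]
    exact h.sum_eq
  sum_le V hV := by
    simp only [sum_indicator_compl_coe, ← union_sdiff_right V U]
    refine le_of_add_le_add_right (a := ∑ x ∈ U, p x) ?_
    rw [sum_sdiff subset_union_right, htight, sum_sdiff subset_union_right]
    exact h.sum_le _ (by simpa using hV.union hU)

theorem UpperSetDominated.exists_tsub_single [DecidableEq Ω] {p q : Ω → ℝ≥0}
    (h : UpperSetDominated p q) {x₀ y₀ : Ω} (hxy : x₀ ≤ y₀) :
    ∃ ε ≤ p x₀, ε ≤ q y₀ ∧ UpperSetDominated (p - Pi.single x₀ ε) (q - Pi.single y₀ ε) ∧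
      (ε = min (p x₀) (q y₀) ∨ ∃ U : Finset Ω, IsUpperSet (U : Set Ω) ∧ y₀ ∈ U ∧ x₀ ∉ U ∧
        ∑ x ∈ U, (p - Pi.single x₀ ε : Ω → ℝ≥0) x =
          ∑ x ∈ U, (q - Pi.single y₀ ε : Ω → ℝ≥0) x) := by
  classical
  set 𝒰 : Finset (Finset Ω) := {U | IsUpperSet (U : Set Ω) ∧ y₀ ∈ U ∧ x₀ ∉ U}
  set slack : Finset Ω → ℝ≥0 := fun U => ∑ x ∈ U, q x - ∑ x ∈ U, p x
  have hslack {ε : ℝ≥0} {U : Finset Ω} (hU : U ∈ 𝒰) :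
      ε ≤ slack U ↔ ∑ x ∈ U, p x + ε ≤ ∑ x ∈ U, q x :=
    le_tsub_iff_left (h.sum_le U (mem_filter.1 hU).2.1)
  -- routing `ε` from `x₀` to `y₀` is admissible while no upper set separating them has less slack
  have route {ε : ℝ≥0} (hp : ε ≤ p x₀) (hq : ε ≤ q y₀) (hε : ∀ U ∈ 𝒰, ε ≤ slack U) :
      UpperSetDominated (p - Pi.single x₀ ε) (q - Pi.single y₀ ε) :=
    h.tsub_single hxy hp hq fun U hU hy hx =>
      (hslack (by simp [𝒰, hU, hy, hx])).1 (hε U (by simp [𝒰, hU, hy, hx]))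
  by_cases hA : ∃ U ∈ 𝒰, slack U < min (p x₀) (q y₀)
  · obtain ⟨U₀, hU₀, hmin⟩ := 𝒰.exists_min_image slack (hA.imp fun U hU => hU.1)
    obtain ⟨hU₀up, hy₀U₀, hx₀U₀⟩ := (mem_filter.1 hU₀).2
    have hεm : slack U₀ < min (p x₀) (q y₀) := (hmin _ hA.choose_spec.1).trans_lt hA.choose_spec.2
    have hεp : slack U₀ ≤ p x₀ := hεm.le.trans (min_le_left _ _)
    have hεq : slack U₀ ≤ q y₀ := hεm.le.trans (min_le_right _ _)
    refine ⟨slack U₀, hεp, hεq, route hεp hεq hmin, Or.inr ⟨U₀, hU₀up, hy₀U₀, hx₀U₀, ?_⟩⟩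
    have hp' := sum_tsub_single_add hεp U₀
    have hq' := sum_tsub_single_add hεq U₀
    simp only [hx₀U₀, hy₀U₀, if_true, if_false, add_zero] at hp' hq'
    refine add_right_cancel (b := slack U₀) ?_
    rw [hp', hq']
    exact add_tsub_cancel_of_le (h.sum_le U₀ hU₀up)
  · push Not at hA
    exact ⟨_, min_le_left _ _, min_le_right _ _, route (min_le_left _ _) (min_le_right _ _) hA,
      Or.inl rfl⟩

theorem UpperSetDominated.exists_isMonotoneCoupling {p q : Ω → ℝ≥0} (h : UpperSetDominated p q) :
    ∃ w, IsMonotoneCoupling w p q := by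
  classical
  induction hn : #{x | p x ≠ 0} + #{x | q x ≠ 0} using Nat.strong_induction_on
    generalizing p q with
  | _ n ih =>
  by_cases hp : p = 0
  · have hq : q = 0 := funext <| by simpa [hp, eq_comm, sum_eq_zero_iff] using h.sum_eq
    exact ⟨0, ⟨by simp, by simp [hp], by simp [hq]⟩⟩
  obtain ⟨x₀, hx₀⟩ : ∃ x, p x ≠ 0 := Function.ne_iff.1 hp
  obtain ⟨y₀, hxy, hy₀⟩ := h.exists_le_ne_zero hx₀
  obtain ⟨ε, hεp, hεq, h', hε | ⟨U, hU, hy₀U, hx₀U, htight⟩⟩ := h.exists_tsub_single hxy <;>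
    refine exists_isMonotoneCoupling_of_tsub_single hxy hεp hεq ?_ <;>
    have hp' := card_filter_ne_zero_le (tsub_le_self : p - Pi.single x₀ ε ≤ p) <;>
    have hq' := card_filter_ne_zero_le (tsub_le_self : q - Pi.single y₀ ε ≤ q)
  · -- `x₀` or `y₀` leaves the support
    refine ih _ ?_ h' rfl
    rcases min_choice (p x₀) (q y₀) with hmin | hmin
    · have := card_filter_ne_zero_lt (tsub_le_self : p - Pi.single x₀ ε ≤ p) hx₀
        (by simp [hε, hmin])
      omega
    · have := card_filter_ne_zero_lt (tsub_le_self : q - Pi.single y₀ ε ≤ q) hy₀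
        (by simp [hε, hmin])
      omega
  · -- `x₀` leaves the support inside `U`, and `y₀` outside
    have hin := card_filter_ne_zero_lt ((Set.indicator_le_self _ _).trans tsub_le_self) hx₀
      (Set.indicator_of_notMem (mt mem_coe.1 hx₀U) (p - Pi.single x₀ ε))
    have hout := card_filter_ne_zero_lt ((Set.indicator_le_self _ _).trans tsub_le_self) hy₀
      (Set.indicator_of_notMem (Set.notMem_compl_iff.2 (mem_coe.2 hy₀U)) (q - Pi.single y₀ ε))
    have hin' := card_filter_ne_zero_le (Set.indicator_le_self (U : Set Ω) (q - Pi.single y₀ ε))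
    have hout' := card_filter_ne_zero_le (Set.indicator_le_self (U : Set Ω)ᶜ (p - Pi.single x₀ ε))
    obtain ⟨w₁, hw₁⟩ := ih _ (by omega) (h'.indicator hU htight) rfl
    obtain ⟨w₂, hw₂⟩ := ih _ (by omega) (h'.indicator_compl hU htight) rfl
    exact ⟨w₁ + w₂, by simpa only [Set.indicator_self_add_compl] using hw₁.add hw₂⟩

end Strassen

section StochDom

variable {α : Type*} [MeasurableSpace α] [MeasurableSingletonClass α]

theorem StochDom.le_of_isUpperSet [Countable α] [Preorder α] {μ ν : Measure α}
    (h : StochDom μ ν) {S : Set α} (hS : IsUpperSet S) : μ S ≤ ν S := by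
  obtain ⟨κ, hκ, rfl, rfl, hle⟩ := h
  have hae : ∀ᵐ z ∂κ, z.1 ≤ z.2 :=
    (prob_compl_eq_zero_iff MeasurableSet.of_discrete).2 hle
  rw [Measure.map_apply measurable_fst .of_discrete, Measure.map_apply measurable_snd .of_discrete]
  exact measure_mono_ae <| hae.mono fun z hz hzS => hS hz hzS

theorem measure_finset_eq_coe_sum_toNNReal (μ : Measure α) [IsFiniteMeasure μ] (U : Finset α) :
    μ U = ↑(∑ x ∈ U, (μ {x}).toNNReal) := by
  rw [ENNReal.ofNNReal_finsetSum, ← sum_measure_singleton]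
  exact sum_congr rfl fun x _ => (ENNReal.coe_toNNReal (measure_ne_top μ _)).symm

theorem stochDom_of_forall_isUpperSet [Fintype α] [Preorder α] (μ ν : Measure α)
    [IsProbabilityMeasure μ] [IsProbabilityMeasure ν] (h : ∀ S : Set α, IsUpperSet S → μ S ≤ ν S) :
    StochDom μ ν := by
  classical
  have hdom : UpperSetDominated (fun x => (μ {x}).toNNReal) (fun x => (ν {x}).toNNReal) := by
    refine ⟨?_, fun U hU => ?_⟩
    · have := measure_finset_eq_coe_sum_toNNReal μ univ
      rw [coe_univ, measure_univ, ← measure_univ (μ := ν), ← coe_univ,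
        measure_finset_eq_coe_sum_toNNReal] at this
      exact_mod_cast this.symm
    · have := h U hU
      rwa [measure_finset_eq_coe_sum_toNNReal, measure_finset_eq_coe_sum_toNNReal,
        ENNReal.coe_le_coe] at this
  obtain ⟨w, hw⟩ := hdom.exists_isMonotoneCoupling
  set κ := ∑ z : α × α, (w z.1 z.2 : ℝ≥0∞) • Measure.dirac z
  have hκ (s : Set (α × α)) : κ s = ∑ z, s.indicator (fun z => (w z.1 z.2 : ℝ≥0∞)) z := by
    simp [κ, Measure.dirac_apply, Set.indicator_apply]
  have hfst : κ.map Prod.fst = μ := Measure.ext_iff_singleton.2 fun x => by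
    rw [Measure.map_apply measurable_fst (measurableSet_singleton x)]
    simp [hκ, Set.indicator_apply, Fintype.sum_prod_type, ← ENNReal.ofNNReal_finsetSum,
      hw.sum_right]
  have hsnd : κ.map Prod.snd = ν := Measure.ext_iff_singleton.2 fun y => by
    rw [Measure.map_apply measurable_snd (measurableSet_singleton y)]
    simp [hκ, Set.indicator_apply, Fintype.sum_prod_type_right, ← ENNReal.ofNNReal_finsetSum,
      hw.sum_left]
  have hprob : κ Set.univ = 1 := by
    rw [← Set.preimage_univ (f := Prod.fst), ← Measure.map_apply measurable_fst .univ, hfst,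
      measure_univ]
  refine ⟨κ, ⟨hprob⟩, hfst, hsnd, ?_⟩
  rw [← hprob, hκ, hκ]
  congr! 1 with z
  rw [Set.indicator_univ,
    Set.indicator_eq_self.2 fun z hz => hw.le_of_ne_zero z.1 z.2 (by simpa using hz)]

end StochDom

theorem card_filter_inv_smul_eq {G P : Type*} [Group G] [Fintype G] [MulAction G P]
    [MulAction.IsPretransitive G P] (Q : P → Prop) [DecidablePred Q] (a a' : P) :
    #{g : G | Q (g⁻¹ • a)} = #{g : G | Q (g⁻¹ • a')} := by
  obtain ⟨τ, rfl⟩ := MulAction.exists_smul_eq G a a'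
  exact card_equiv (Equiv.mulLeft τ) fun g => by simp [mul_smul]

open scoped Classical in
theorem measure_le_of_forall_card_le {Γ α : Type*} [Fintype Γ] [Nonempty Γ] [Fintype α]
    [MeasurableSpace α] [MeasurableSingletonClass α] (ρ : Measure α) (f : Γ → α → α)
    (hf : ∀ g, ρ.map (f g) = ρ) {S T : Set α}
    (hST : ∀ x, #{g | f g x ∈ S} ≤ #{g | f g x ∈ T}) : ρ S ≤ ρ T := by
  -- averaging over `Γ`: `ρ R` is the `ρ`-mean of the proportion of `g` with `f g x ∈ R`
  have key (R : Set α) :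
      (Fintype.card Γ : ℝ≥0∞) * ρ R = ∑ x, (#{g | f g x ∈ R} : ℝ≥0∞) * ρ {x} := by
    calc (Fintype.card Γ : ℝ≥0∞) * ρ R = ∑ g, ρ (f g ⁻¹' R) := by
          simp [← Measure.map_apply Measurable.of_discrete MeasurableSet.of_discrete, hf]
      _ = ∑ g, ∑ x, if f g x ∈ R then ρ {x} else 0 := by
          refine sum_congr rfl fun g _ => ?_
          rw [← Measure.tsum_indicator_apply_singleton ρ _ .of_discrete, tsum_fintype]
          simp [Set.indicator_apply]
      _ = _ := by
          rw [sum_comm]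
          simp [← sum_filter]
  rw [← ENNReal.mul_le_mul_iff_right (by simp) (ENNReal.natCast_ne_top (Fintype.card Γ)), key,
    key]
  exact sum_le_sum fun x _ => mul_le_mul_left (by exact_mod_cast hST x) _

section Interpolation

variable {V : Type*} [LinearOrder V]

theorem card_exists_le_at_base_le {Γ P ι : Type*} [Fintype Γ] (X : Γ → P → V) (p₀ : P)
    (hX : ∀ a c, #{γ | c ≤ X γ a} = #{γ | c ≤ X γ p₀}) (C : Finset ι) (c : ι → V) (a : ι → P) :
    #{γ | ∃ i ∈ C, c i ≤ X γ p₀} ≤ #{γ | ∃ i ∈ C, c i ≤ X γ (a i)} := by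
  rcases C.eq_empty_or_nonempty with rfl | hC
  · simp
  -- a union of thresholds at a single point is the threshold of the smallest one
  obtain ⟨i₀, hi₀, hmin⟩ := C.exists_min_image c hC
  calc #{γ | ∃ i ∈ C, c i ≤ X γ p₀} = #{γ | c i₀ ≤ X γ p₀} := by
        congr 1; ext γ
        simpa using ⟨fun ⟨i, hi, h⟩ => (hmin i hi).trans h, fun h => ⟨i₀, hi₀, h⟩⟩
    _ = #{γ | c i₀ ≤ X γ (a i₀)} := (hX _ _).symm
    _ ≤ _ := card_le_card fun γ => by simpa using fun h => ⟨i₀, hi₀, h⟩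

theorem Equiv.forall_piSplitAt_symm_apply {B : Type*} [DecidableEq B] {Γ : B → Type*} (j : B)
    (g : Γ j) (γ : ∀ b : {b // b ≠ j}, Γ b) (R : ∀ b, Γ b → Prop) :
    (∀ b, R b ((Equiv.piSplitAt j Γ).symm (g, γ) b)) ↔ R j g ∧ ∀ b : {b // b ≠ j}, R b (γ b) := by
  refine ⟨fun h => ⟨by simpa using h j, fun b => by simpa [b.2] using h b⟩, fun ⟨hj, h⟩ b => ?_⟩
  by_cases hb : b = j
  · subst hb; simpa using hj
  · simpa [hb] using h ⟨b, hb⟩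

variable {B : Type*} [Fintype B] [DecidableEq B] {Γ P : B → Type*} [∀ b, Fintype (Γ b)]
  (X : ∀ b, Γ b → P b → V) (p₀ : ∀ b, P b)
  {ι : Type*} (W : Finset ι) (c : ι → B → V)

theorem card_exists_forall_le_le_of_eq_of_ne {u v : ι → ∀ b, P b} (j : B)
    (hX : ∀ a d, #{γ | d ≤ X j γ a} = #{γ | d ≤ X j γ (p₀ j)})
    (hu : ∀ i, u i j = p₀ j) (huv : ∀ i b, b ≠ j → u i b = v i b) :
    #{γ : ∀ b, Γ b | ∃ i ∈ W, ∀ b, c i b ≤ X b (γ b) (u i b)} ≤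
      #{γ : ∀ b, Γ b | ∃ i ∈ W, ∀ b, c i b ≤ X b (γ b) (v i b)} := by
  set e := Equiv.piSplitAt j Γ
  have hsplit (Q : (∀ b, Γ b) → Prop) [DecidablePred Q] :
      #{γ | Q γ} = ∑ γ' : ∀ b : {b // b ≠ j}, Γ b, #{g | Q (e.symm (g, γ'))} := by
    simp only [card_filter]
    rw [← e.symm.sum_comp, Fintype.sum_prod_type, sum_comm]
  rw [hsplit, hsplit]
  refine sum_le_sum fun γ' _ => ?_
  let C := W.filter fun i => ∀ b : {b // b ≠ j}, c i b ≤ X b (γ' b) (u i b)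
  have hC (w : ι → ∀ b, P b) (hw : ∀ i b, b ≠ j → u i b = w i b) (g : Γ j) :
      (∃ i ∈ W, ∀ b, c i b ≤ X b (e.symm (g, γ') b) (w i b)) ↔ ∃ i ∈ C, c i j ≤ X j g (w i j) := by
    simp only [C, mem_filter, and_assoc]
    refine exists_congr fun i => and_congr_right fun _ => ?_
    refine (Equiv.forall_piSplitAt_symm_apply j g γ' fun b γ => c i b ≤ X b γ (w i b)).trans ?_
    rw [and_comm]
    exact and_congr_left' (forall_congr' fun b => by rw [hw i b b.2])
  calc #{g | ∃ i ∈ W, ∀ b, c i b ≤ X b (e.symm (g, γ') b) (u i b)}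
      = #{g | ∃ i ∈ C, c i j ≤ X j g (p₀ j)} := by
        simp only [hC u fun _ _ _ => rfl, hu]
    _ ≤ #{g | ∃ i ∈ C, c i j ≤ X j g (v i j)} := card_exists_le_at_base_le (X j) (p₀ j) hX C _ _
    _ = _ := by simp only [hC v huv]

theorem card_exists_forall_le_at_base_le
    (hX : ∀ b a d, #{γ | d ≤ X b γ a} = #{γ | d ≤ X b γ (p₀ b)}) (t : ι → ∀ b, P b) :
    #{γ : ∀ b, Γ b | ∃ i ∈ W, ∀ b, c i b ≤ X b (γ b) (p₀ b)} ≤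
      #{γ : ∀ b, Γ b | ∃ i ∈ W, ∀ b, c i b ≤ X b (γ b) (t i b)} := by
  let mix (T : Finset B) (i : ι) (b : B) : P b := if b ∈ T then t i b else p₀ b
  have key (T : Finset B) : #{γ : ∀ b, Γ b | ∃ i ∈ W, ∀ b, c i b ≤ X b (γ b) (p₀ b)} ≤
      #{γ : ∀ b, Γ b | ∃ i ∈ W, ∀ b, c i b ≤ X b (γ b) (mix T i b)} := by
    induction T using Finset.induction_on with
    | empty => simp [mix]
    | insert j T hj ih =>
      refine ih.trans <| card_exists_forall_le_le_of_eq_of_ne X p₀ W c j (hX j)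
        (by simp [mix, hj]) fun i b hb => by simp [mix, hb]
  simpa [mix] using key univ

end Interpolation

section Fibres

variable {A B : Type*} (π : A → B)

def liftAlong [DecidableEq A] {M : Type*} [Zero M] (t : ∀ b, {a // π a = b}) (z : B → M) : A → M :=
  fun a => if (t (π a) : A) = a then z (π a) else 0

def fibreSmul {Γ : B → Type*} [∀ b, Group (Γ b)] [∀ b, MulAction (Γ b) {a // π a = b}]
    {M : Type*} (σ : ∀ b, Γ b) (x : A → M) : A → M :=
  fun a => x ((σ (π a))⁻¹ • ⟨a, rfl⟩ : {c // π c = π a})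

theorem fibreSmul_apply_coe {Γ : B → Type*} [∀ b, Group (Γ b)] [∀ b, MulAction (Γ b) {a // π a = b}]
    {M : Type*} (σ : ∀ b, Γ b) (x : A → M) {b : B} (p : {a // π a = b}) :
    fibreSmul π σ x p = x ↑((σ b)⁻¹ • p) := by
  obtain ⟨a, rfl⟩ := p
  rfl

theorem liftAlong_mono [DecidableEq A] {M : Type*} [Zero M] [Preorder M] (t : ∀ b, {a // π a = b}) :
    Monotone (liftAlong π t : (B → M) → A → M) := fun z z' h a => by
  unfold liftAlong
  split_ifs
  exacts [h _, le_rfl]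

theorem liftAlong_le [DecidableEq A] {n : ℕ} {t : ∀ b, {a // π a = b}} {z : B → Fin (n + 1)}
    {x : A → Fin (n + 1)} (h : ∀ b, z b ≤ x (t b)) : liftAlong π t z ≤ x := fun a => by
  unfold liftAlong
  split_ifs with ha
  · exact (h (π a)).trans_eq (congrArg x ha)
  · exact Fin.zero_le _

theorem exists_le_liftAlong_sup [Fintype A] [DecidableEq A] [DecidableEq B] {n : ℕ}
    {x : A → Fin (n + 1)} (hx : ∀ a a' : A, π a = π a' → x a ≠ 0 → x a' ≠ 0 → a = a')
    (t₀ : ∀ b, {a // π a = b}) :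
    ∃ t, x ≤ liftAlong π t fun b => ({c | π c = b} : Finset A).sup x := by
  have (b : B) : ∃ p : {a // π a = b}, ∀ a : {a // π a = b}, x a ≠ 0 → a = p := by
    by_cases h : ∃ p : {a // π a = b}, x p ≠ 0
    · obtain ⟨p, hp⟩ := h
      exact ⟨p, fun a ha => Subtype.ext (hx _ _ (a.2.trans p.2.symm) ha hp)⟩
    · exact ⟨t₀ b, fun a ha => (ha (not_exists_not.1 h a)).elim⟩
  choose t ht using this
  refine ⟨t, fun a => ?_⟩
  by_cases ha : x a = 0
  · exact ha ▸ Fin.zero_le _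
  · have : t (π a) = ⟨a, rfl⟩ := (ht (π a) ⟨a, rfl⟩ ha).symm
    simp only [liftAlong, this, if_true]
    exact le_sup (by simp)

theorem card_fibreSmul_mem_le [Fintype A] [DecidableEq A] [Fintype B] [DecidableEq B]
    {Γ : B → Type*} [∀ b, Group (Γ b)] [∀ b, Fintype (Γ b)] [∀ b, MulAction (Γ b) {a // π a = b}]
    [∀ b, MulAction.IsPretransitive (Γ b) {a // π a = b}] {n : ℕ} (x : A → Fin (n + 1))
    (s₀ : ∀ b, {a // π a = b}) {U : Set (A → Fin (n + 1))} [DecidablePred (· ∈ U)]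
    (hU : IsUpperSet U) :
    #{σ : ∀ b, Γ b | ∃ t, liftAlong π t (fun b => fibreSmul π σ x (s₀ b)) ∈ U} ≤
      #{σ : ∀ b, Γ b | fibreSmul π σ x ∈ U} := by
  let W : Finset ((B → Fin (n + 1)) × ∀ b, {a // π a = b}) := {w | liftAlong π w.2 w.1 ∈ U}
  calc _ ≤ #{σ : ∀ b, Γ b | ∃ w ∈ W, ∀ b, w.1 b ≤ x ↑((σ b)⁻¹ • s₀ b)} :=
        card_le_card fun σ => by
          simp only [mem_filter, mem_univ, true_and, W]
          exact fun ⟨t, ht⟩ => ⟨(_, t), ht, fun b => (fibreSmul_apply_coe π σ x (s₀ b)).le⟩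
    _ ≤ #{σ : ∀ b, Γ b | ∃ w ∈ W, ∀ b, w.1 b ≤ x ↑((σ b)⁻¹ • w.2 b)} :=
        card_exists_forall_le_at_base_le (fun b (γ : Γ b) (p : {a // π a = b}) => x ↑(γ⁻¹ • p))
          s₀ W (fun w => w.1)
          (fun b a d => card_filter_inv_smul_eq (fun p : {a // π a = b} => d ≤ x p) a (s₀ b))
          (fun w => w.2)
    _ ≤ _ := card_le_card fun σ => by
          simp only [mem_filter, mem_univ, true_and, W]
          exact fun ⟨w, hw, hle⟩ => hU (liftAlong_le π fun b =>
            (hle b).trans_eq (fibreSmul_apply_coe π σ x (w.2 b)).symm) hw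

end Fibres

theorem stmt7_general (N : ℕ)
    {A B : Type*} [Fintype A] [Fintype B]
    [DecidableEq B]
    (π : A → B) (hπ : Function.Surjective π)
    (μ ρ : Measure (A → Fin (N + 1)))
    [IsProbabilityMeasure μ] [IsProbabilityMeasure ρ]
    -- (1) `μ` is a `π`-lift
    (hlift : μ {x | ∀ a a' : A, π a = π a' → x a ≠ 0 → x a' ≠ 0 → a = a'} = 1)
    -- (2) `ρ` is sufficiently symmetric
    (G : (b : B) → Subgroup (Equiv.Perm {a : A // π a = b}))
    (htrans : ∀ b : B, ∀ a₁ a₂ : {a : A // π a = b}, ∃ g ∈ G b, g a₁ = a₂)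
    (hinv : ∀ σ : (b : B) → Equiv.Perm {a : A // π a = b}, (∀ b, σ b ∈ G b) →
      ρ.map (fun x a => x (((σ (π a)).symm ⟨a, rfl⟩ : {c : A // π c = π a}) : A)) = ρ)
    -- (3) the pushdown of `μ` is dominated by the horizontal marginal of `ρ`
    (hpush : ∀ s : B → A, (∀ b, π (s b) = b) →
      StochDom
        (μ.map fun x b => (Finset.univ.filter fun c => π c = b).sup x)
        (ρ.map fun x b => x (s b))) :
    StochDom μ ρ := by
  classical
  refine stochDom_of_forall_isUpperSet μ ρ fun U hU => ?_
  obtain ⟨s₀, hs₀⟩ := hπ.hasRightInverse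
  have : ∀ b, MulAction.IsPretransitive (G b) {a // π a = b} := fun b =>
    ⟨fun a₁ a₂ => by obtain ⟨g, hg, h⟩ := htrans b a₁ a₂; exact ⟨⟨g, hg⟩, h⟩⟩
  let E : Set (B → Fin (N + 1)) := {z | ∃ t, liftAlong π t z ∈ U}
  have hE : IsUpperSet E := fun z z' hz ⟨t, ht⟩ => ⟨t, hU (liftAlong_mono π t hz) ht⟩
  have hlift' : ∀ᵐ x ∂μ, ∀ a a' : A, π a = π a' → x a ≠ 0 → x a' ≠ 0 → a = a' :=
    (prob_compl_eq_zero_iff .of_discrete).2 hlift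
  calc μ U ≤ μ ((fun x b => ({c | π c = b} : Finset A).sup x) ⁻¹' E) :=
        measure_mono_ae <| hlift'.mono fun x hx hxU =>
          (exists_le_liftAlong_sup π hx fun b => ⟨s₀ b, hs₀ b⟩).imp fun t ht => hU ht hxU
    _ = (μ.map fun x b => ({c | π c = b} : Finset A).sup x) E :=
        (Measure.map_apply .of_discrete .of_discrete).symm
    _ ≤ (ρ.map fun x b => x (s₀ b)) E := (hpush s₀ hs₀).le_of_isUpperSet hE
    _ = ρ ((fun x b => x (s₀ b)) ⁻¹' E) := Measure.map_apply .of_discrete .of_discrete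
    _ ≤ ρ U := measure_le_of_forall_card_le ρ (fibreSmul π (Γ := fun b => G b))
        (fun σ => hinv (fun b => σ b) fun b => (σ b).2) fun x =>
          (card_le_card fun σ hσ => by simpa [E] using hσ).trans
            (card_fibreSmul_mem_le π x (fun b => ⟨s₀ b, hs₀ b⟩) hU)

/-- **Corollary (sufficiently symmetric target).**  If `μ` is a `π`-lift, `ρ` is
sufficiently symmetric, and the pushdown of `μ` is dominated by the horizontal marginal
of `ρ` (i.e. by the `s`-marginal for every section `s`), then `μ` is dominated by `ρ`. -/
theorem stmt7 (N : ℕ)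
    {A B : Type*} [Fintype A] [Nonempty A] [DecidableEq A] [Fintype B] [Nonempty B]
    [DecidableEq B]
    (π : A → B) (hπ : Function.Surjective π)
    (μ ρ : Measure (A → Fin (N + 1)))
    [IsProbabilityMeasure μ] [IsProbabilityMeasure ρ]
    -- (1) `μ` is a `π`-lift
    (hlift : μ {x | ∀ a a' : A, π a = π a' → x a ≠ 0 → x a' ≠ 0 → a = a'} = 1)
    -- (2) `ρ` is sufficiently symmetric
    (G : (b : B) → Subgroup (Equiv.Perm {a : A // π a = b}))
    (htrans : ∀ b : B, ∀ a₁ a₂ : {a : A // π a = b}, ∃ g ∈ G b, g a₁ = a₂)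
    (hinv : ∀ σ : (b : B) → Equiv.Perm {a : A // π a = b}, (∀ b, σ b ∈ G b) →
      ρ.map (fun x a => x (((σ (π a)).symm ⟨a, rfl⟩ : {c : A // π c = π a}) : A)) = ρ)
    -- (3) the pushdown of `μ` is dominated by the horizontal marginal of `ρ`
    (hpush : ∀ s : B → A, (∀ b, π (s b) = b) →
      StochDom
        (μ.map fun x b => (Finset.univ.filter fun c => π c = b).sup x)
        (ρ.map fun x b => x (s b))) :
    StochDom μ ρ :=
  stmt7_general N π hπ μ ρ hlift G htrans hinv hpush
end

section
/- Let C be a finite set, p_i ∈ [0,1] for i ∈ C, and P = ⊗_{i∈C} Bernoulli(p_i) on {0,1}^C. Let E₁, E₂ be increasing subsets of {0,1}^C. Let Q be a probability measure on {0,1}^{C×{1,2}} of the form ⊗_{i∈C} ρ_i, where each ρ_i is a probability measure on {0,1}² whose two marginals are Bernoulli measures of parameter at least p_i. Then P(E₁ ∘ E₂) ≤ Q(E₁ × E₂), where E₁ × E₂ is viewed as a subset of {0,1}^{C×{1,2}} ≅ {0,1}^C × {0,1}^C. -/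
open MeasureTheory ProbabilityTheory

/-- Disjoint occurrence of two events in `{0,1}^C`. -/
def DisjOcc {C : Type*} (E₁ E₂ : Set (C → Bool)) : Set (C → Bool) :=
  {ω | ∃ P₁ P₂ : Set C, Disjoint P₁ P₂ ∧
    (∀ ω', (∀ i ∈ P₁, ω' i = ω i) → ω' ∈ E₁) ∧
    (∀ ω', (∀ i ∈ P₂, ω' i = ω i) → ω' ∈ E₂)}

/-- An increasing (upward closed) event. -/
def IncreasingEvent {C : Type*} (E : Set (C → Bool)) : Prop :=
  ∀ ω ∈ E, ∀ ω' : C → Bool, ω ≤ ω' → ω' ∈ E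

/-- Bernoulli measure of parameter `p` on `Bool`. -/
noncomputable def bern (p : ENNReal) : Measure Bool :=
  p • Measure.dirac true + (1 - p) • Measure.dirac false

/-!
Induction on the coordinate set, peeling off one coordinate `none` of `Option α`. Write `A_a`, `B_b`
for the slices of `E₁`, `E₂` at `none = a, b`. If `none` is closed, `E₁ ∘ E₂` slices into
`A₀ ∘ B₀`; if it is open, only one of the two disjoint witnesses can use it, so the slice lies in
`U ∪ V` with `U = A₀ ∘ B₁`, `V = A₁ ∘ B₀`. By induction and monotonicity, `P(A₀ ∘ B₀)` is at most
every `Q(A_a × B_b)`, `P(U ∪ V) ≤ Q(A₁ × B₁)`, and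
`P(A₀ ∘ B₀) + P(U ∪ V) ≤ P(U ∩ V) + P(U ∪ V) = P(U) + P(V) ≤ Q(A₀ × B₁) + Q(A₁ × B₀)`.
These inequalities combine with the one-coordinate weights through a linear inequality whose
only input about `ρ` is that both marginals give `1` at least the mass `p` does.
-/

section Events

variable {α : Type*}

def prodEvent (E₁ E₂ : Set (α → Bool)) : Set (α → Bool × Bool) :=
  {f | (fun i => (f i).1) ∈ E₁ ∧ (fun i => (f i).2) ∈ E₂}

def optionSlice {β : Type*} (S : Set (Option α → β)) (b : β) : Set (α → β) :=
  {ω | Option.elim' b ω ∈ S}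

theorem IncreasingEvent.preimage_comp {β : Type*} {E : Set (β → Bool)}
    (hE : IncreasingEvent E) (g : β → α) : IncreasingEvent ((· ∘ g) ⁻¹' E) :=
  fun _ hω _ hle => hE _ hω _ fun b => hle (g b)

theorem IncreasingEvent.optionSlice {E : Set (Option α → Bool)} (hE : IncreasingEvent E)
    (b : Bool) : IncreasingEvent (optionSlice E b) :=
  fun _ hω _ hle => hE _ hω _ (Option.rec le_rfl hle)

theorem IncreasingEvent.optionSlice_false_subset {E : Set (Option α → Bool)}
    (hE : IncreasingEvent E) (b : Bool) :
    _root_.optionSlice E false ⊆ _root_.optionSlice E b :=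
  fun _ hω => hE _ hω _ (Option.rec (Bool.false_le b) fun _ => le_rfl)

theorem optionSlice_prodEvent (E₁ E₂ : Set (Option α → Bool)) (a b : Bool) :
    optionSlice (prodEvent E₁ E₂) (a, b) = prodEvent (optionSlice E₁ a) (optionSlice E₂ b) := by
  have h₁ (f : α → Bool × Bool) :
      (fun i => (Option.elim' (a, b) f i).1) = Option.elim' a fun i => (f i).1 := by
    funext o; cases o <;> rfl
  have h₂ (f : α → Bool × Bool) :
      (fun i => (Option.elim' (a, b) f i).2) = Option.elim' b fun i => (f i).2 := by
    funext o; cases o <;> rfl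
  ext f
  simp only [optionSlice, prodEvent, Set.mem_ofPred_eq, h₁, h₂]

theorem disjOcc_mono {E₁ E₂ F₁ F₂ : Set (α → Bool)} (h₁ : E₁ ⊆ F₁) (h₂ : E₂ ⊆ F₂) :
    DisjOcc E₁ E₂ ⊆ DisjOcc F₁ F₂ :=
  fun _ ⟨P₁, P₂, hP, hE₁, hE₂⟩ =>
    ⟨P₁, P₂, hP, fun ω' hω' => h₁ (hE₁ ω' hω'), fun ω' hω' => h₂ (hE₂ ω' hω')⟩

theorem mem_disjOcc_preimage_comp {β : Type*} {g : β → α} (hg : Function.Injective g)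
    {E₁ E₂ : Set (β → Bool)} {ω : α → Bool} (h : ω ∘ g ∈ DisjOcc E₁ E₂) :
    ω ∈ DisjOcc ((· ∘ g) ⁻¹' E₁) ((· ∘ g) ⁻¹' E₂) := by
  obtain ⟨P₁, P₂, hP, hE₁, hE₂⟩ := h
  exact ⟨g '' P₁, g '' P₂, (Set.disjoint_image_iff hg).2 hP,
    fun ω' hω' => hE₁ _ fun i hi => hω' _ ⟨i, hi, rfl⟩,
    fun ω' hω' => hE₂ _ fun i hi => hω' _ ⟨i, hi, rfl⟩⟩

theorem Option.elim'_eq_of_forall_some_mem {β : Type*} {P : Set (Option α)} {b c : β}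
    {ω ω' : α → β} (hc : none ∈ P → c = b) (h : ∀ i ∈ some ⁻¹' P, ω' i = ω i) :
    ∀ i ∈ P, Option.elim' c ω' i = Option.elim' b ω i
  | none, hi => hc hi
  | some i, hi => h i hi

theorem optionSlice_disjOcc_subset (E₁ E₂ : Set (Option α → Bool)) (b : Bool) :
    optionSlice (DisjOcc E₁ E₂) b ⊆ DisjOcc (optionSlice E₁ b) (optionSlice E₂ b) := by
  rintro ω ⟨P₁, P₂, hP, hE₁, hE₂⟩
  exact ⟨some ⁻¹' P₁, some ⁻¹' P₂, hP.preimage _,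
    fun ω' hω' => hE₁ _ (Option.elim'_eq_of_forall_some_mem (fun _ => rfl) hω'),
    fun ω' hω' => hE₂ _ (Option.elim'_eq_of_forall_some_mem (fun _ => rfl) hω')⟩

/-- At most one of two disjoint witnesses uses the coordinate `none`; the other one still
forces its event after `none` is closed. -/
theorem optionSlice_true_disjOcc_subset (E₁ E₂ : Set (Option α → Bool)) :
    optionSlice (DisjOcc E₁ E₂) true ⊆
      DisjOcc (optionSlice E₁ true) (optionSlice E₂ false) ∪
        DisjOcc (optionSlice E₁ false) (optionSlice E₂ true) := by
  rintro ω ⟨P₁, P₂, hP, hE₁, hE₂⟩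
  by_cases hn : none ∈ P₂
  · have hn₁ : none ∉ P₁ := Set.disjoint_right.1 hP hn
    exact Or.inr ⟨some ⁻¹' P₁, some ⁻¹' P₂, hP.preimage _,
      fun ω' hω' => hE₁ _ (Option.elim'_eq_of_forall_some_mem (absurd · hn₁) hω'),
      fun ω' hω' => hE₂ _ (Option.elim'_eq_of_forall_some_mem (fun _ => rfl) hω')⟩
  · exact Or.inl ⟨some ⁻¹' P₁, some ⁻¹' P₂, hP.preimage _,
      fun ω' hω' => hE₁ _ (Option.elim'_eq_of_forall_some_mem (fun _ => rfl) hω'),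
      fun ω' hω' => hE₂ _ (Option.elim'_eq_of_forall_some_mem (absurd · hn) hω')⟩

end Events

/-- The one-coordinate step: `wt, wf` are the masses of `1, 0`, `rₐ_b` those of `(a, b)`, `x` and
`u` the conditional left-hand sides and `yₐ_b` the conditional right-hand sides. Either
`r₁₁ ≥ wt`, or the deficit `wt - r₁₁` fits under both `r₁₀` and `r₀₁` and is paid for by
`x + u ≤ y₀₁ + y₁₀`. -/
theorem ENNReal.mul_add_mul_le_of_marginal_le
    {wt wf r₁₁ r₁₀ r₀₁ r₀₀ x u y₁₁ y₁₀ y₀₁ y₀₀ : ENNReal}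
    (hw : wt + wf = 1) (hr : r₁₁ + r₁₀ + (r₀₁ + r₀₀) = 1)
    (hfst : wt ≤ r₁₁ + r₁₀) (hsnd : wt ≤ r₁₁ + r₀₁)
    (hx₁₁ : x ≤ y₁₁) (hx₁₀ : x ≤ y₁₀) (hx₀₁ : x ≤ y₀₁) (hx₀₀ : x ≤ y₀₀)
    (hu : u ≤ y₁₁) (hxu : x + u ≤ y₀₁ + y₁₀) :
    wt * u + wf * x ≤ r₁₁ * y₁₁ + r₁₀ * y₁₀ + (r₀₁ * y₀₁ + r₀₀ * y₀₀) := by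
  rcases le_total wt r₁₁ with h | h
  · obtain ⟨s, hs⟩ := exists_add_of_le h
    have hwt : wt ≠ ⊤ := ne_top_of_le_ne_top one_ne_top (hw ▸ le_self_add)
    have hwf : wf = s + r₁₀ + r₀₁ + r₀₀ :=
      (ENNReal.add_right_inj hwt).1 (by rw [hw, ← hr, hs]; ring)
    calc wt * u + wf * x = wt * u + (s * x + r₁₀ * x + r₀₁ * x + r₀₀ * x) := by
          rw [hwf]; ring
      _ ≤ wt * y₁₁ + (s * y₁₁ + r₁₀ * y₁₀ + r₀₁ * y₀₁ + r₀₀ * y₀₀) := by gcongr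
      _ = _ := by rw [hs]; ring
  · obtain ⟨s, rfl⟩ := exists_add_of_le h
    have hr₁₁ : r₁₁ ≠ ⊤ := ne_top_of_le_ne_top one_ne_top (hr ▸ le_add_right le_self_add)
    obtain ⟨t₁₀, rfl⟩ := exists_add_of_le ((ENNReal.add_le_add_iff_left hr₁₁).1 hfst)
    obtain ⟨t₀₁, rfl⟩ := exists_add_of_le ((ENNReal.add_le_add_iff_left hr₁₁).1 hsnd)
    have hwt : r₁₁ + s ≠ ⊤ := ne_top_of_le_ne_top one_ne_top (hw ▸ le_self_add)
    have hwf : wf = t₁₀ + t₀₁ + r₀₀ + s :=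
      (ENNReal.add_right_inj hwt).1 (by rw [hw, ← hr]; ring)
    calc (r₁₁ + s) * u + wf * x = r₁₁ * u + s * (x + u) + t₁₀ * x + t₀₁ * x + r₀₀ * x := by
          rw [hwf]; ring
      _ ≤ r₁₁ * y₁₁ + s * (y₀₁ + y₁₀) + t₁₀ * y₁₀ + t₀₁ * y₀₁ + r₀₀ * y₀₀ := by gcongr
      _ = _ := by ring

theorem MeasureTheory.Measure.pi_option_apply {α β : Type*} [Fintype α] [MeasurableSpace β]
    [MeasurableSingletonClass β] [Fintype β] (μ : Option α → Measure β)
    [∀ i, SigmaFinite (μ i)] {S : Set (Option α → β)} (hS : MeasurableSet S) :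
    Measure.pi μ S = ∑ b, μ none {b} * Measure.pi (fun a => μ (some a)) (optionSlice S b) := by
  have hslice (b : β) : (fun ω => (ω, b)) ⁻¹'
      ((MeasurableEquiv.piOptionEquivProd fun _ => β).symm ⁻¹' S) = optionSlice S b := by
    ext ω
    change _ ∈ S ↔ Option.elim' b ω ∈ S
    congr!
    funext o; cases o <;> rfl
  rw [← pi_map_piOptionEquivProd μ, Measure.map_apply (MeasurableEquiv.measurable _) hS,
    Measure.prod_apply_symm (hS.preimage (MeasurableEquiv.measurable _)), lintegral_fintype]
  simp only [hslice, mul_comm]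

def DisjOccBound (α : Type*) [Fintype α] : Prop :=
  ∀ (μ : α → Measure Bool) [∀ i, IsProbabilityMeasure (μ i)]
    (ρ : α → Measure (Bool × Bool)) [∀ i, IsProbabilityMeasure (ρ i)],
    (∀ i, μ i {true} ≤ ρ i (Prod.fst ⁻¹' {true})) →
    (∀ i, μ i {true} ≤ ρ i (Prod.snd ⁻¹' {true})) →
    ∀ E₁ E₂ : Set (α → Bool), IncreasingEvent E₁ → IncreasingEvent E₂ →
      Measure.pi μ (DisjOcc E₁ E₂) ≤ Measure.pi ρ (prodEvent E₁ E₂)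

namespace DisjOccBound

theorem of_equiv {α β : Type*} [Fintype α] [Fintype β] (e : α ≃ β) (h : DisjOccBound α) :
    DisjOccBound β := by
  intro μ _ ρ _ hfst hsnd E₁ E₂ h₁ h₂
  have hμ := measurePreserving_arrowCongr' (fun i => μ (e i)) μ e (.refl Bool)
    fun _ => .id _
  have hρ := measurePreserving_arrowCongr' (fun i => ρ (e i)) ρ e (.refl (Bool × Bool))
    fun _ => .id _
  rw [← hμ.measure_preimage_equiv, ← hρ.measure_preimage_equiv]
  exact (measure_mono fun ω => mem_disjOcc_preimage_comp e.symm.injective).trans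
    (h _ _ (fun _ => hfst _) (fun _ => hsnd _) _ _ (h₁.preimage_comp e.symm)
      (h₂.preimage_comp e.symm))

theorem pEmpty : DisjOccBound PEmpty := by
  intro μ _ ρ _ _ _ E₁ E₂ _ _
  rcases (DisjOcc E₁ E₂).eq_empty_or_nonempty with h | ⟨ω, P₁, P₂, -, hE₁, hE₂⟩
  · simp [h]
  · have : prodEvent E₁ E₂ = Set.univ :=
      Set.eq_univ_of_forall fun f => ⟨hE₁ _ fun i => i.elim, hE₂ _ fun i => i.elim⟩
    simp [this, prob_le_one]

theorem option {α : Type*} [Fintype α] (ih : DisjOccBound α) : DisjOccBound (Option α) := by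
  intro μ _ ρ _ hfst hsnd E₁ E₂ h₁ h₂
  set A := optionSlice E₁
  set B := optionSlice E₂
  set P := Measure.pi fun a => μ (some a)
  set Q := Measure.pi fun a => ρ (some a)
  have IH (a b : Bool) : P (DisjOcc (A a) (B b)) ≤ Q (prodEvent (A a) (B b)) :=
    ih _ _ (fun _ => hfst _) (fun _ => hsnd _) _ _ (h₁.optionSlice a) (h₂.optionSlice b)
  have hA := h₁.optionSlice_false_subset
  have hB := h₂.optionSlice_false_subset
  set U := DisjOcc (A false) (B true)
  set V := DisjOcc (A true) (B false)
  set x := P (DisjOcc (A false) (B false))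
  have hx (a b : Bool) : x ≤ Q (prodEvent (A a) (B b)) :=
    (measure_mono (disjOcc_mono (hA a) (hB b))).trans (IH a b)
  have hu : P (V ∪ U) ≤ Q (prodEvent (A true) (B true)) :=
    (measure_mono (Set.union_subset (disjOcc_mono subset_rfl (hB true))
      (disjOcc_mono (hA true) subset_rfl))).trans (IH true true)
  have hxu : x + P (V ∪ U) ≤
      Q (prodEvent (A false) (B true)) + Q (prodEvent (A true) (B false)) :=
    calc x + P (V ∪ U) ≤ P (U ∩ V) + P (U ∪ V) := by
          rw [Set.union_comm]
          exact add_le_add_left (measure_mono (Set.subset_inter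
            (disjOcc_mono subset_rfl (hB true)) (disjOcc_mono (hA true) subset_rfl))) _
      _ = P U + P V := by rw [add_comm, measure_union_add_inter _ .of_discrete]
      _ ≤ _ := add_le_add (IH false true) (IH true false)
  have hμ : μ none {true} + μ none {false} = 1 := by
    have h := measure_univ (μ := μ none)
    rwa [← Finset.coe_univ, ← sum_measure_singleton, Fintype.sum_bool] at h
  have hρ : ρ none {(true, true)} + ρ none {(true, false)} +
      (ρ none {(false, true)} + ρ none {(false, false)}) = 1 := by
    have h := measure_univ (μ := ρ none)
    rwa [← Finset.coe_univ, ← sum_measure_singleton, Fintype.sum_prod_type, Fintype.sum_bool,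
      Fintype.sum_bool, Fintype.sum_bool] at h
  have hρfst := (hfst none).trans_eq
    ((measure_preimage_fst_singleton_eq_sum _ _).trans (Fintype.sum_bool _))
  have hρsnd := (hsnd none).trans_eq
    ((measure_preimage_snd_singleton_eq_sum _ _).trans (Fintype.sum_bool _))
  rw [Measure.pi_option_apply _ .of_discrete, Measure.pi_option_apply _ .of_discrete,
    Fintype.sum_bool, Fintype.sum_prod_type]
  simp only [Fintype.sum_bool, optionSlice_prodEvent]
  calc μ none {true} * P (optionSlice (DisjOcc E₁ E₂) true) +
        μ none {false} * P (optionSlice (DisjOcc E₁ E₂) false)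
      ≤ μ none {true} * P (V ∪ U) + μ none {false} * x := by
        gcongr
        · exact optionSlice_true_disjOcc_subset E₁ E₂
        · exact measure_mono (optionSlice_disjOcc_subset E₁ E₂ false)
    _ ≤ _ := ENNReal.mul_add_mul_le_of_marginal_le hμ hρ hρfst hρsnd
        (hx _ _) (hx _ _) (hx _ _) (hx _ _) hu hxu

end DisjOccBound

theorem disjOccBound (α : Type*) [Fintype α] : DisjOccBound α :=
  @Fintype.induction_empty_option (fun α _ => DisjOccBound α)
    (fun _ β _ e h => @DisjOccBound.of_equiv _ _ (.ofEquiv β e.symm) _ e h)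
    DisjOccBound.pEmpty (fun _ _ h => h.option) α _

theorem bern_singleton_true (p : ENNReal) : bern p {true} = p := by
  simp [bern]

theorem isProbabilityMeasure_bern {p : ENNReal} (hp : p ≤ 1) : IsProbabilityMeasure (bern p) :=
  ⟨by simp [bern, add_tsub_cancel_of_le hp]⟩

/-- **A generalised BK-type inequality.**  If `Q = ⊗_i ρ_i` where each `ρ_i` is a
probability measure on `{0,1}²` whose two marginals are Bernoulli of parameter at
least `p_i`, then `P(E₁ ∘ E₂) ≤ Q(E₁ × E₂)`. -/
theorem stmt9 {C : Type*} [Fintype C]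
    (p : C → ENNReal) (hp : ∀ i, p i ≤ 1)
    (E₁ E₂ : Set (C → Bool))
    (h₁ : IncreasingEvent E₁) (h₂ : IncreasingEvent E₂)
    (ρ : C → Measure (Bool × Bool)) [∀ i, IsProbabilityMeasure (ρ i)]
    (hfst : ∀ i, ∃ q : ENNReal, p i ≤ q ∧ q ≤ 1 ∧ (ρ i).map Prod.fst = bern q)
    (hsnd : ∀ i, ∃ q : ENNReal, p i ≤ q ∧ q ≤ 1 ∧ (ρ i).map Prod.snd = bern q) :
    Measure.pi (fun i => bern (p i)) (DisjOcc E₁ E₂) ≤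
      Measure.pi ρ
        {f | (fun i => (f i).1) ∈ E₁ ∧ (fun i => (f i).2) ∈ E₂} := by
  have hbern := fun i => isProbabilityMeasure_bern (hp i)
  refine disjOccBound C _ ρ (fun i => ?_) (fun i => ?_) E₁ E₂ h₁ h₂
  · obtain ⟨q, hpq, -, hq⟩ := hfst i
    rwa [← Measure.map_apply measurable_fst (.singleton true), hq, bern_singleton_true,
      bern_singleton_true]
  · obtain ⟨q, hpq, -, hq⟩ := hsnd i
    rwa [← Measure.map_apply measurable_snd (.singleton true), hq, bern_singleton_true,
      bern_singleton_true]
end
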